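/- Let S and T be nonempty finite subsets of ℝ^d, let 𝒜 be a nonempty finite set of vectors in ℝ^d, let 𝒟 = { min_{w∈T} ⟨a,w⟩ − max_{v∈S} ⟨a,v⟩ : a ∈ 𝒜 } ∪ { min_{v∈S} ⟨a,v⟩ − max_{w∈T} ⟨a,w⟩ : a ∈ 𝒜 } (counted with multiplicity, so |𝒟| = 2|𝒜|), and for α > 0 define h_DCSAT := (1/α) log(∑_{d ∈ 𝒟} e^{α d}) − log(2|𝒜|)/α. If h_DCSAT > 0, then the convex hulls of S and T are disjoint. -/

import Mathlib

/-- Half-space separation lemma: if all of `S` projects `≤ c` and all of `T`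
projects `> c` along `a`, the convex hulls are disjoint. -/
lemma sep_disjoint {d : ℕ} (S T : Finset (EuclideanSpace ℝ (Fin d)))
    (a : EuclideanSpace ℝ (Fin d)) (c : ℝ)
    (hSle : ∀ v ∈ S, (inner ℝ a v : ℝ) ≤ c)
    (hTgt : ∀ w ∈ T, c < (inner ℝ a w : ℝ)) :
    Disjoint (convexHull ℝ (S : Set (EuclideanSpace ℝ (Fin d))))
             (convexHull ℝ (T : Set (EuclideanSpace ℝ (Fin d)))) := by
  have hlin : IsLinearMap ℝ (fun x : EuclideanSpace ℝ (Fin d) => (inner ℝ a x : ℝ)) :=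
    ⟨fun x y => inner_add_right a x y, fun r x => real_inner_smul_right a x r⟩
  have h1 : convexHull ℝ (S : Set (EuclideanSpace ℝ (Fin d))) ⊆ {x | (inner ℝ a x : ℝ) ≤ c} :=
    convexHull_min (fun v hv => hSle v (by exact_mod_cast hv)) (convex_halfSpace_le hlin c)
  have h2 : convexHull ℝ (T : Set (EuclideanSpace ℝ (Fin d))) ⊆ {x | c < (inner ℝ a x : ℝ)} :=
    convexHull_min (fun w hw => hTgt w (by exact_mod_cast hw)) (convex_halfSpace_gt hlin c)
  rw [Set.disjoint_left]
  intro x hx1 hx2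
  have g1 := h1 hx1
  have g2 := h2 hx2
  simp only [Set.mem_setOf_eq] at g1 g2
  linarith

/-- **Positive DCSAT certifies disjointness.**
Given nonempty finite vertex sets `S, T ⊆ ℝ^d` and a nonempty finite set `𝒜`
of candidate axes, let `𝒟` consist (with multiplicity, `|𝒟| = 2|𝒜|`) of the
per-axis separations `d₁(a) = min_{w∈T} ⟪a,w⟫ − max_{v∈S} ⟪a,v⟫` and
`d₂(a) = min_{v∈S} ⟪a,v⟫ − max_{w∈T} ⟪a,w⟫`. If the smoothed metric
`h_DCSAT = (1/α) log (∑_{d∈𝒟} exp (α d)) − log (2|𝒜|)/α` is positive, then the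
convex hulls of `S` and `T` are disjoint. -/
theorem dcsat_pos_implies_disjoint {d : ℕ}
    (S T : Finset (EuclideanSpace ℝ (Fin d))) (hS : S.Nonempty) (hT : T.Nonempty)
    (𝒜 : Finset (EuclideanSpace ℝ (Fin d))) (h𝒜 : 𝒜.Nonempty)
    (α : ℝ) (hα : 0 < α)
    (hpos : 0 <
      (1 / α) * Real.log (∑ a ∈ 𝒜,
          (Real.exp (α * (T.inf' hT (fun w => (inner ℝ a w : ℝ))
                            - S.sup' hS (fun v => (inner ℝ a v : ℝ))))
            + Real.exp (α * (S.inf' hS (fun v => (inner ℝ a v : ℝ))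
                            - T.sup' hT (fun w => (inner ℝ a w : ℝ))))))
        - Real.log (2 * 𝒜.card) / α) :
    Disjoint (convexHull ℝ (S : Set (EuclideanSpace ℝ (Fin d))))
             (convexHull ℝ (T : Set (EuclideanSpace ℝ (Fin d)))) := by
  set f : EuclideanSpace ℝ (Fin d) → ℝ := fun a =>
      Real.exp (α * (T.inf' hT (fun w => (inner ℝ a w : ℝ))
                        - S.sup' hS (fun v => (inner ℝ a v : ℝ))))
        + Real.exp (α * (S.inf' hS (fun v => (inner ℝ a v : ℝ))
                        - T.sup' hT (fun w => (inner ℝ a w : ℝ)))) with hf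
  -- There exists an axis with a positive separation.
  have hexist : ∃ a ∈ 𝒜,
      0 < T.inf' hT (fun w => (inner ℝ a w : ℝ)) - S.sup' hS (fun v => (inner ℝ a v : ℝ)) ∨
      0 < S.inf' hS (fun v => (inner ℝ a v : ℝ)) - T.sup' hT (fun w => (inner ℝ a w : ℝ)) := by
    by_contra hcon
    push_neg at hcon
    have hsum_le : (∑ a ∈ 𝒜, f a) ≤ 2 * 𝒜.card := by
      calc (∑ a ∈ 𝒜, f a) ≤ ∑ _a ∈ 𝒜, (2 : ℝ) := by
            apply Finset.sum_le_sum
            intro a ha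
            obtain ⟨h1, h2⟩ := hcon a ha
            have e1 : Real.exp (α * (T.inf' hT (fun w => (inner ℝ a w : ℝ))
                - S.sup' hS (fun v => (inner ℝ a v : ℝ)))) ≤ 1 := by
              rw [Real.exp_le_one_iff]
              exact mul_nonpos_of_nonneg_of_nonpos hα.le h1
            have e2 : Real.exp (α * (S.inf' hS (fun v => (inner ℝ a v : ℝ))
                - T.sup' hT (fun w => (inner ℝ a w : ℝ)))) ≤ 1 := by
              rw [Real.exp_le_one_iff]
              exact mul_nonpos_of_nonneg_of_nonpos hα.le h2
            simp only [hf]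
            linarith
        _ = 2 * 𝒜.card := by rw [Finset.sum_const]; ring
    have hcardpos : (0 : ℝ) < 2 * 𝒜.card := by
      have : (0 : ℝ) < 𝒜.card := by exact_mod_cast Finset.card_pos.mpr h𝒜
      linarith
    have hlog : Real.log (∑ a ∈ 𝒜, f a) ≤ Real.log (2 * 𝒜.card) :=
      by
      have hsumpos : 0 < ∑ a ∈ 𝒜, f a := by
        apply Finset.sum_pos _ h𝒜
        intro a _
        simp only [hf]
        positivity
      exact Real.log_le_log hsumpos hsum_le
    have : (1 / α) * Real.log (∑ a ∈ 𝒜, f a) - Real.log (2 * 𝒜.card) / α ≤ 0 := by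
      rw [sub_nonpos, one_div, inv_mul_eq_div]
      gcongr
    exact absurd hpos (not_lt.mpr this)
  obtain ⟨a, _, hcase⟩ := hexist
  rcases hcase with h | h
  · -- S below, T above, separating value c = sup' over S
    refine sep_disjoint S T a (S.sup' hS (fun v => (inner ℝ a v : ℝ)))
      (fun v hv => Finset.le_sup' _ hv) (fun w hw => ?_)
    have := Finset.inf'_le (fun w => (inner ℝ a w : ℝ)) hw
    linarith [sub_pos.mp h]
  · -- T below, S above: use -a… or swap via Disjoint symm
    refine (sep_disjoint T S a (T.sup' hT (fun w => (inner ℝ a w : ℝ)))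
      (fun w hw => Finset.le_sup' _ hw) (fun v hv => ?_)).symm
    have := Finset.inf'_le (fun v => (inner ℝ a v : ℝ)) hv
    linarith [sub_pos.mp h]
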